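/- arXiv:1702.05888 — 2 statements merged into one kernel-verified Lean document; each statement's English description precedes it below -/
import Mathlib

section
/- Let V be a finite type with two distinct distinguished elements s (source) and t (terminal), and let ψ : V → V → ℝ be antisymmetric (ψ i j = −ψ j i for all i, j). If for every subset S ⊆ V with s ∈ S and t ∉ S the net flow across S vanishes, i.e. ∑_{i ∈ S} ∑_{j ∉ S} ψ i j = 0, then ψ is a null flow: ∑_{j ∈ V} ψ j i = 0 for every i ∈ V, including i = s and i = t. -/
open Finset

/-
Since ψ is antisymmetric, the flow inside S cancels, so the net flow across S is the sum of the
total outflows `∑ j, ψ i j` over i ∈ S. The cuts {s} and {s, i} force every outflow except the one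
at t to vanish, and the outflow at t vanishes too because the total outflow over all of V cancels.
Finally the inflow at i is minus the outflow at i.
-/

section Antisymm

variable {V M : Type*} [AddCommGroup M] {ψ : V → V → M}

theorem Finset.sum_sum_eq_zero_of_antisymm [IsAddTorsionFree M] (hψ : ∀ i j, ψ i j = -ψ j i)
    (S : Finset V) : ∑ i ∈ S, ∑ j ∈ S, ψ i j = 0 :=
  self_eq_neg.mp <| calc
    ∑ i ∈ S, ∑ j ∈ S, ψ i j = ∑ j ∈ S, ∑ i ∈ S, -ψ j i := by rw [sum_comm]; simp only [← hψ]
    _ = -∑ i ∈ S, ∑ j ∈ S, ψ i j := by simp only [sum_neg_distrib]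

theorem Finset.sum_sum_compl_eq_sum_sum_univ_of_antisymm [IsAddTorsionFree M] [Fintype V]
    [DecidableEq V] (hψ : ∀ i j, ψ i j = -ψ j i) (S : Finset V) :
    ∑ i ∈ S, ∑ j ∈ Sᶜ, ψ i j = ∑ i ∈ S, ∑ j, ψ i j := by
  simp only [← sum_add_sum_compl S (ψ _), sum_add_distrib, sum_sum_eq_zero_of_antisymm hψ,
    zero_add]

theorem sum_apply_left_eq_neg_sum_apply_right_of_antisymm [Fintype V]
    (hψ : ∀ i j, ψ i j = -ψ j i) (i : V) : ∑ j, ψ j i = -∑ j, ψ i j := by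
  simp only [hψ _ i, sum_neg_distrib]

end Antisymm

theorem eq_zero_of_sum_eq_zero_of_sum_eq_zero_on_cuts {V M : Type*} [AddCommGroup M] [Fintype V]
    [DecidableEq V] {s t : V} (hst : s ≠ t) {f : V → M} (hsum : ∑ i, f i = 0)
    (hcut : ∀ S : Finset V, s ∈ S → t ∉ S → ∑ i ∈ S, f i = 0) (i : V) : f i = 0 := by
  have hs : f s = 0 := by simpa using hcut {s} (mem_singleton_self s) (by simpa using hst.symm)
  have hne_t : ∀ i, i ≠ t → f i = 0 := by
    intro i hit
    rcases eq_or_ne s i with rfl | hsi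
    · exact hs
    have hpair := hcut {s, i} (by simp) (by simp [hst.symm, hit.symm])
    rwa [sum_pair hsi, hs, zero_add] at hpair
  rcases eq_or_ne i t with rfl | hit
  · have hrest : ∑ j ∈ univ.erase i, f j = 0 :=
      hcut _ (mem_erase.mpr ⟨hst, mem_univ s⟩) (notMem_erase i univ)
    rwa [← sum_erase_add univ f (mem_univ i), hrest, zero_add] at hsum
  · exact hne_t i hit

/-- If an antisymmetric `ψ` has zero net flow across every `s`-`t` cut, then it is
a null flow: conservative at every node, including `s` and `t`. -/
theorem null_flow_of_net_flow_vanishes_on_st_cuts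
    {V : Type*} [Fintype V] [DecidableEq V] (s t : V) (hst : s ≠ t)
    (ψ : V → V → ℝ)
    (hanti : ∀ i j, ψ i j = -ψ j i)
    (hcut : ∀ S : Finset V, s ∈ S → t ∉ S → ∑ i ∈ S, ∑ j ∈ Sᶜ, ψ i j = 0) :
    ∀ i, ∑ j, ψ j i = 0 := by
  have houtflow : ∀ i, ∑ j, ψ i j = 0 :=
    eq_zero_of_sum_eq_zero_of_sum_eq_zero_on_cuts hst (sum_sum_eq_zero_of_antisymm hanti univ)
      fun S hs ht => by rw [← sum_sum_compl_eq_sum_sum_univ_of_antisymm hanti S, hcut S hs ht]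
  intro i
  rw [sum_apply_left_eq_neg_sum_apply_right_of_antisymm hanti i, houtflow i, neg_zero]
end

section
/- (Conservative flows on an Ishikawa graph with identical source-flows and exit-flows have identical column-flows.) Let ψ and ψ' be conservative flows on the Ishikawa graph. Suppose they have identical source-flows, ψ(s, U_{i:ℓ-1}) = ψ'(s, U_{i:ℓ-1}) for every i ∈ V, and identical exit-flows, Σ_{ij:λ} = Σ'_{ij:λ} for every ordered pair (i, j) with E i j and every λ ∈ Fin ℓ. Then they have identical column-flows: ψ_{i:λ} = ψ'_{i:λ} for every i ∈ V and every λ ∈ Fin ℓ. -/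
/-!
The difference `δ = ψ - ψ'` is again a conservative flow, and it has zero source-flows and zero
exit-flows. Conservation at `U_{i:ν}` with `ν ≥ 1` then only sees the column: since `E` is
irreflexive no cross edge stays inside a column, the cross edges from column `j` into `U_{i:ν}`
carry total flow `-Σ_{ij:ν} = 0`, so the column-flow entering `U_{i:ν}` from above equals the
one leaving it below, `δ_{i:ν} = δ_{i:ν-1}`. Descending from `δ_{i:ℓ-1}`, the source-flow, every
column-flow of `δ` vanishes.
-/

open Finset

/-- Nodes of the Ishikawa graph: base vertices `V` with `ℓ` labels each,
plus the source `Sum.inr true` and the terminal `Sum.inr false`. -/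
abbrev IshNode (V : Type*) (ℓ : ℕ) := (V × Fin ℓ) ⊕ Bool

/-- The symmetric edge predicate of the Ishikawa graph built from a base
relation `E` on `V`: source edges `{s, U_{i:ℓ-1}}`, column edges
`{U_{i:λ}, U_{i:λ-1}}`, terminal edges `{U_{i:0}, t}`, and cross edges
`{U_{i:λ}, U_{j:μ}}` for all `λ, μ` whenever `E i j`. -/
def IshEdge {V : Type*} {ℓ : ℕ} (E : V → V → Prop) :
    IshNode V ℓ → IshNode V ℓ → Prop
  | Sum.inr true, Sum.inl (_, lam) => lam.val = ℓ - 1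
  | Sum.inl (_, lam), Sum.inr true => lam.val = ℓ - 1
  | Sum.inl (_, lam), Sum.inr false => lam.val = 0
  | Sum.inr false, Sum.inl (_, lam) => lam.val = 0
  | Sum.inl (i, lam), Sum.inl (j, mu) =>
      (i = j ∧ (lam.val = mu.val + 1 ∨ mu.val = lam.val + 1)) ∨ E i j
  | _, _ => False

/-- The column-flow `ψ_{i:λ}`: the flow `ψ(U_{i:λ+1}, U_{i:λ})` for `λ < ℓ-1`,
and the source-flow `ψ(s, U_{i:ℓ-1})` for `λ = ℓ-1`. -/
def colFlow {V : Type*} {ℓ : ℕ}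
    (ψ : IshNode V ℓ → IshNode V ℓ → ℝ) (i : V) (lam : Fin ℓ) : ℝ :=
  if h : lam.val = ℓ - 1 then ψ (Sum.inr true) (Sum.inl (i, lam))
  else ψ (Sum.inl (i, ⟨lam.val + 1, by have := lam.isLt; omega⟩)) (Sum.inl (i, lam))

structure IsConservativeFlow {V : Type*} [Fintype V] {ℓ : ℕ} (E : V → V → Prop)
    (ψ : IshNode V ℓ → IshNode V ℓ → ℝ) : Prop where
  antisymm : ∀ n m, ψ n m = -ψ m n
  eq_zero_of_not_edge : ∀ n m, ¬ IshEdge E n m → ψ n m = 0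
  sum_inflow_eq_zero : ∀ p : V × Fin ℓ, ∑ m, ψ m (Sum.inl p) = 0

theorem Fin.forall_of_last_of_pred {ℓ : ℕ} {P : Fin ℓ → Prop}
    (last : ∀ lam : Fin ℓ, lam.val = ℓ - 1 → P lam)
    (pred : ∀ lam ν : Fin ℓ, ν.val = lam.val + 1 → P ν → P lam) (lam : Fin ℓ) : P lam := by
  obtain ⟨n, rfl⟩ : ∃ n, ℓ = n + 1 := ⟨ℓ - 1, by have := lam.isLt; omega⟩
  induction lam using Fin.reverseInduction with
  | last => exact last _ (by simp)
  | cast lam ih => exact pred _ _ (by simp) ih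

theorem colFlow_sub {V : Type*} {ℓ : ℕ} (ψ ψ' : IshNode V ℓ → IshNode V ℓ → ℝ) (i : V)
    (lam : Fin ℓ) : colFlow (ψ - ψ') i lam = colFlow ψ i lam - colFlow ψ' i lam := by
  unfold colFlow
  split <;> rfl

theorem colFlow_eq_flow_from_succ {V : Type*} {ℓ : ℕ} (ψ : IshNode V ℓ → IshNode V ℓ → ℝ) (i : V)
    {lam ν : Fin ℓ} (h : ν.val = lam.val + 1) :
    colFlow ψ i lam = ψ (Sum.inl (i, ν)) (Sum.inl (i, lam)) := by
  have hν := ν.isLt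
  rw [colFlow, dif_neg (by omega)]
  simp only [← h]

theorem not_ishEdge_same_column {V : Type*} {ℓ : ℕ} {E : V → V → Prop} (hirr : Irreflexive E)
    {i : V} {μ ν : Fin ℓ} (h₁ : μ.val ≠ ν.val + 1) (h₂ : ν.val ≠ μ.val + 1) :
    ¬ IshEdge E (Sum.inl (i, μ)) (Sum.inl (i, ν)) := by
  simp only [IshEdge, true_and, not_or]
  exact ⟨⟨h₁, h₂⟩, hirr i⟩

namespace IsConservativeFlow

variable {V : Type*} [Fintype V] {ℓ : ℕ} {E : V → V → Prop}
  {δ ψ ψ' : IshNode V ℓ → IshNode V ℓ → ℝ}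

theorem sub (hψ : IsConservativeFlow E ψ) (hψ' : IsConservativeFlow E ψ') :
    IsConservativeFlow E (ψ - ψ') where
  antisymm n m := by
    simp only [Pi.sub_apply, hψ.antisymm n m, hψ'.antisymm n m, neg_sub_neg, neg_sub]
  eq_zero_of_not_edge n m h := by
    simp only [Pi.sub_apply, hψ.eq_zero_of_not_edge n m h, hψ'.eq_zero_of_not_edge n m h, sub_self]
  sum_inflow_eq_zero p := by
    simp only [Pi.sub_apply, sum_sub_distrib, hψ.sum_inflow_eq_zero p, hψ'.sum_inflow_eq_zero p,
      sub_self]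

variable (hδ : IsConservativeFlow E δ)
include hδ

/-- Without `E i j` the edges between the two columns only exist in the direction `E j i`, and
those carry no flow by antisymmetry. -/
theorem sum_inflow_from_column_eq_zero {i j : V} (hji : j ≠ i) (ν : Fin ℓ)
    (hexit : E i j → ∑ μ : Fin ℓ, δ (Sum.inl (i, ν)) (Sum.inl (j, μ)) = 0) :
    ∑ μ : Fin ℓ, δ (Sum.inl (j, μ)) (Sum.inl (i, ν)) = 0 := by
  have hout : ∑ μ : Fin ℓ, δ (Sum.inl (i, ν)) (Sum.inl (j, μ)) = 0 := by
    by_cases hE : E i j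
    · exact hexit hE
    · refine sum_eq_zero fun μ _ => hδ.eq_zero_of_not_edge _ _ ?_
      simp [IshEdge, hji.symm, hE]
  simp only [hδ.antisymm (Sum.inl (j, _)), sum_neg_distrib, hout, neg_zero]

theorem sum_inflow_from_source_and_column (hirr : Irreflexive E) (i : V) {lam ν : Fin ℓ}
    (h : ν.val = lam.val + 1) :
    ∑ b : Bool, δ (Sum.inr b) (Sum.inl (i, ν)) + ∑ μ : Fin ℓ, δ (Sum.inl (i, μ)) (Sum.inl (i, ν)) =
      colFlow δ i ν + δ (Sum.inl (i, lam)) (Sum.inl (i, ν)) := by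
  have hν := ν.isLt
  have hterminal : δ (Sum.inr false) (Sum.inl (i, ν)) = 0 :=
    hδ.eq_zero_of_not_edge _ _ (by simp only [IshEdge]; omega)
  rw [Fintype.sum_bool, hterminal, add_zero]
  by_cases htop : ν.val = ℓ - 1
  · rw [colFlow, dif_pos htop, Fintype.sum_eq_single lam fun μ hμ =>
      hδ.eq_zero_of_not_edge _ _ (not_ishEdge_same_column hirr (by omega)
      fun _ => hμ (Fin.ext (by omega)))]
  · let up : Fin ℓ := ⟨ν.val + 1, by omega⟩
    have hsource : δ (Sum.inr true) (Sum.inl (i, ν)) = 0 :=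
      hδ.eq_zero_of_not_edge _ _ (by simpa only [IshEdge] using htop)
    rw [colFlow, dif_neg htop, hsource, zero_add, add_comm,
      Fintype.sum_eq_add lam up (Fin.ne_of_val_ne (by simp [up]; omega)) fun μ hμ =>
        hδ.eq_zero_of_not_edge _ _ (not_ishEdge_same_column hirr
          (fun h' => hμ.2 (Fin.ext h')) (fun h' => hμ.1 (Fin.ext (by omega))))]

theorem colFlow_eq_colFlow_succ (hirr : Irreflexive E)
    (hexit : ∀ i j : V, E i j → ∀ lam : Fin ℓ,
      ∑ μ : Fin ℓ, δ (Sum.inl (i, lam)) (Sum.inl (j, μ)) = 0)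
    (i : V) {lam ν : Fin ℓ} (h : ν.val = lam.val + 1) :
    colFlow δ i lam = colFlow δ i ν := by
  have hcons := hδ.sum_inflow_eq_zero (i, ν)
  rw [Fintype.sum_sum_type, Fintype.sum_prod_type,
    Fintype.sum_eq_single i fun j hji => hδ.sum_inflow_from_column_eq_zero hji ν (hexit i j · ν),
    add_comm, hδ.sum_inflow_from_source_and_column hirr i h, hδ.antisymm (Sum.inl (i, lam)),
    ← colFlow_eq_flow_from_succ δ i h] at hcons
  linarith

theorem colFlow_eq_zero (hirr : Irreflexive E)
    (hsrc : ∀ (i : V) (lam : Fin ℓ), lam.val = ℓ - 1 → δ (Sum.inr true) (Sum.inl (i, lam)) = 0)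
    (hexit : ∀ i j : V, E i j → ∀ lam : Fin ℓ,
      ∑ μ : Fin ℓ, δ (Sum.inl (i, lam)) (Sum.inl (j, μ)) = 0)
    (i : V) (lam : Fin ℓ) : colFlow δ i lam = 0 :=
  Fin.forall_of_last_of_pred (P := fun lam => colFlow δ i lam = 0)
    (fun lam htop => by rw [colFlow, dif_pos htop, hsrc i lam htop])
    (fun _ _ h hν => (hδ.colFlow_eq_colFlow_succ hirr hexit i h).trans hν) lam

end IsConservativeFlow

/-- Conservative flows on an Ishikawa graph with identical source-flows and
identical exit-flows have identical column-flows. -/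
theorem colFlows_eq_of_same_source_and_exit_flows
    {V : Type*} [Fintype V] {ℓ : ℕ} (hℓ : 1 ≤ ℓ)
    (E : V → V → Prop) (hirr : Irreflexive E)
    (ψ ψ' : IshNode V ℓ → IshNode V ℓ → ℝ)
    (hanti : ∀ n m, ψ n m = -ψ m n)
    (hanti' : ∀ n m, ψ' n m = -ψ' m n)
    (hsupp : ∀ n m, ¬ IshEdge E n m → ψ n m = 0)
    (hsupp' : ∀ n m, ¬ IshEdge E n m → ψ' n m = 0)
    (hcons : ∀ p : V × Fin ℓ, ∑ m, ψ m (Sum.inl p) = 0)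
    (hcons' : ∀ p : V × Fin ℓ, ∑ m, ψ' m (Sum.inl p) = 0)
    (hsrc : ∀ i : V,
      ψ (Sum.inr true) (Sum.inl (i, ⟨ℓ - 1, by omega⟩)) =
        ψ' (Sum.inr true) (Sum.inl (i, ⟨ℓ - 1, by omega⟩)))
    (hexit : ∀ i j : V, E i j → ∀ lam : Fin ℓ,
      ∑ mu : Fin ℓ, ψ (Sum.inl (i, lam)) (Sum.inl (j, mu)) =
        ∑ mu : Fin ℓ, ψ' (Sum.inl (i, lam)) (Sum.inl (j, mu))) :
    ∀ (i : V) (lam : Fin ℓ), colFlow ψ i lam = colFlow ψ' i lam := by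
  have hδ : IsConservativeFlow E (ψ - ψ') :=
    IsConservativeFlow.sub ⟨hanti, hsupp, hcons⟩ ⟨hanti', hsupp', hcons'⟩
  have hsrcδ : ∀ (i : V) (lam : Fin ℓ), lam.val = ℓ - 1 →
      (ψ - ψ') (Sum.inr true) (Sum.inl (i, lam)) = 0 := by
    rintro i lam htop
    rw [show lam = ⟨ℓ - 1, by omega⟩ from Fin.ext htop]
    exact sub_eq_zero.mpr (hsrc i)
  have hexitδ : ∀ i j : V, E i j → ∀ lam : Fin ℓ,
      ∑ μ : Fin ℓ, (ψ - ψ') (Sum.inl (i, lam)) (Sum.inl (j, μ)) = 0 := by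
    intro i j hE lam
    simp only [Pi.sub_apply, sum_sub_distrib, hexit i j hE lam, sub_self]
  intro i lam
  rw [← sub_eq_zero, ← colFlow_sub]
  exact hδ.colFlow_eq_zero hirr hsrcδ hexitδ i lam
end
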